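/- Let A and B be vertices of X = J(v,k,i) and let x = |A ∩ B|. If there is a walk of odd length 2p + 1 from A to B in X, then p ≥ ⌈(x − i)/Δ⌉. -/

import Mathlib

/-!
If `C ~ D ~ E` in `J(v,k,i)`, every point of `E` lies in `C`, in `D ∩ E` (`i` points) or outside
`C ∪ D` (`v - 2k + i` points), so two steps raise the intersection with a fixed set by at most
`Δ`. The first step of an odd walk from `A` lands on a vertex meeting `A` in exactly `i` points,
and the remaining `p` double steps bring the intersection with `A` to at most `i + pΔ`.
-/

/-- The generalized Johnson graph `J(v,k,i)`: vertices are the `k`-element subsets of a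
`v`-element set, two vertices adjacent iff their intersection has exactly `i` elements. -/
def genJohnsonGraph (v k i : ℕ) :
    SimpleGraph {A : Finset (Fin v) // A.card = k} where
  Adj A B := A ≠ B ∧ (A.1 ∩ B.1).card = i
  symm := ⟨by
    rintro A B ⟨hne, hcard⟩
    exact ⟨hne.symm, by rwa [Finset.inter_comm]⟩⟩
  loopless := ⟨by rintro A ⟨hne, -⟩; exact hne rfl⟩

open Finset

theorem Nat.ceilDiv_le_of_le_mul {a b c : ℕ} (h : a ≤ b * c) : a ⌈/⌉ b ≤ c := by
  rcases Nat.eq_zero_or_pos b with rfl | hb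
  · simp
  · exact (ceilDiv_le_iff_le_mul hb).2 h

theorem Finset.card_inter_le_card_inter_add_card_inter_add_card_compl_union {α : Type*}
    [Fintype α] [DecidableEq α] (A C D E : Finset α) :
    #(A ∩ E) ≤ #(A ∩ C) + #(D ∩ E) + #(C ∪ D)ᶜ := by
  have hcover : A ∩ E ⊆ A ∩ C ∪ D ∩ E ∪ (C ∪ D)ᶜ := by
    intro x
    simp only [mem_inter, mem_union, mem_compl]
    tauto
  calc #(A ∩ E) ≤ #(A ∩ C ∪ D ∩ E ∪ (C ∪ D)ᶜ) := card_le_card hcover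
    _ ≤ #(A ∩ C ∪ D ∩ E) + #(C ∪ D)ᶜ := card_union_le _ _
    _ ≤ #(A ∩ C) + #(D ∩ E) + #(C ∪ D)ᶜ := by gcongr; exact card_union_le _ _

namespace genJohnsonGraph

variable {v k i : ℕ}

theorem card_inter_le_of_adj_of_adj (A : Finset (Fin v)) {C D E : {A : Finset (Fin v) // #A = k}}
    (hCD : (genJohnsonGraph v k i).Adj C D) (hDE : (genJohnsonGraph v k i).Adj D E) :
    #(A ∩ E.1) ≤ #(A ∩ C.1) + (v - 2 * k + 2 * i) := by
  have hcover := card_inter_le_card_inter_add_card_inter_add_card_compl_union A C.1 D.1 E.1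
  have hunion : #(C.1 ∪ D.1) + i = 2 * k := by
    rw [← hCD.2, card_union_add_card_inter, C.2, D.2, two_mul]
  rw [card_compl, Fintype.card_fin, hDE.2] at hcover
  omega

theorem card_inter_le_of_walk_length_eq_two_mul (A : Finset (Fin v)) (p : ℕ) :
    ∀ {C B : {A : Finset (Fin v) // #A = k}} (w : (genJohnsonGraph v k i).Walk C B),
      w.length = 2 * p → #(A ∩ B.1) ≤ #(A ∩ C.1) + p * (v - 2 * k + 2 * i) := by
  induction p with
  | zero =>
    intro C B w hw
    obtain rfl := w.eq_of_length_eq_zero hw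
    simp
  | succ p ih =>
    intro C B w hw
    match w, hw with
    | .cons hCD (.cons hDE w), hw =>
      have hstep := card_inter_le_of_adj_of_adj A hCD hDE
      have hrest := ih w (by simp only [SimpleGraph.Walk.length_cons] at hw; omega)
      rw [add_mul, one_mul]
      omega

end genJohnsonGraph

theorem odd_walk_bound_general (v k i : ℕ)
    (A B : {A : Finset (Fin v) // A.card = k}) (p : ℕ)
    (w : (genJohnsonGraph v k i).Walk A B) (hw : w.length = 2 * p + 1) :
    ((A.1 ∩ B.1).card - i) ⌈/⌉ (v - 2 * k + 2 * i) ≤ p := by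
  cases w with
  | nil => simp at hw
  | cons hAC w =>
    have hbound :=
      genJohnsonGraph.card_inter_le_of_walk_length_eq_two_mul A.1 p w (by simpa using hw)
    rw [hAC.2] at hbound
    exact Nat.ceilDiv_le_of_le_mul (by rw [mul_comm]; omega)

/-- If there is a walk of odd length `2p + 1` from `A` to `B` in `J(v,k,i)`,
then `p ≥ ⌈(x - i)/Δ⌉` where `x = |A ∩ B|`. -/
theorem odd_walk_bound (v k i : ℕ) (hik : i < k) (hkv : k < v)
    (h2k : 2 * k ≤ v) (hexc : ¬(v = 2 * k ∧ i = 0))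
    (A B : {A : Finset (Fin v) // A.card = k}) (p : ℕ)
    (w : (genJohnsonGraph v k i).Walk A B) (hw : w.length = 2 * p + 1) :
    ((A.1 ∩ B.1).card - i) ⌈/⌉ (v - 2 * k + 2 * i) ≤ p :=
  odd_walk_bound_general v k i A B p w hw
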